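/- Suppose the minimum over all paths from w_0 through points w_1,...,w_J to w_{J+1} with g(w) ≤ L of f(w) = Σ_j |w_j - z_j|^p is attained at some w*. If L is strictly less than the length of every tour visiting all z_j (so f(w*) > 0), then g(w*) = L; i.e., the inequality constraint is active at any optimum. -/

import Mathlib

noncomputable def pathLen (J : ℕ) (p0 pend : EuclideanSpace ℝ (Fin 2))
    (w : Fin J → EuclideanSpace ℝ (Fin 2)) : ℝ :=
  ∑ j : Fin (J + 1),
    ‖(Fin.cons p0 (Fin.snoc w pend) : Fin (J + 2) → EuclideanSpace ℝ (Fin 2)) j.castSucc -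
      (Fin.cons p0 (Fin.snoc w pend) : Fin (J + 2) → EuclideanSpace ℝ (Fin 2)) j.succ‖

noncomputable def totalEnergy (J : ℕ) (p : ℝ) (z : Fin J → EuclideanSpace ℝ (Fin 2))
    (w : Fin J → EuclideanSpace ℝ (Fin 2)) : ℝ :=
  ∑ j, ‖w j - z j‖ ^ p

/-!
If the length constraint were slack at `wstar`, then `wstar ≠ z` (the tour through the `z j` is
too long), so some vertex `wstar j` differs from `z j`. Moving that vertex a little towards `z j`
strictly lowers the energy, and by continuity of the path length the moved path is still feasible,
contradicting minimality.
-/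

open Filter Topology

lemma continuous_pathLen (J : ℕ) (p0 pend : EuclideanSpace ℝ (Fin 2)) :
    Continuous (pathLen J p0 pend) := by
  unfold pathLen
  fun_prop

lemma totalEnergy_update_lt {J : ℕ} {p : ℝ} (hp : 0 < p) (z w : Fin J → EuclideanSpace ℝ (Fin 2))
    {j : Fin J} {v : EuclideanSpace ℝ (Fin 2)} (hv : ‖v - z j‖ < ‖w j - z j‖) :
    totalEnergy J p z (Function.update w j v) < totalEnergy J p z w := by
  have hterm : ‖v - z j‖ ^ p < ‖w j - z j‖ ^ p := Real.rpow_lt_rpow (norm_nonneg _) hv hp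
  refine Finset.sum_lt_sum (fun i _ => ?_) ⟨j, Finset.mem_univ j, by simpa using hterm⟩
  rcases eq_or_ne i j with rfl | hi
  · simpa using hterm.le
  · rw [Function.update_of_ne hi]

lemma norm_lineMap_sub_right_lt {E : Type*} [NormedAddCommGroup E] [NormedSpace ℝ E] {x y : E}
    (hxy : x ≠ y) {t : ℝ} (ht₀ : 0 < t) (ht₁ : t < 1) :
    ‖AffineMap.lineMap x y t - y‖ < ‖x - y‖ := by
  rw [← dist_eq_norm, ← dist_eq_norm, dist_lineMap_right, Real.norm_of_nonneg (by linarith)]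
  exact mul_lt_of_lt_one_left (dist_pos.2 hxy) (by linarith)

theorem stmt_4_general (J : ℕ) (p : ℝ) (hp : 0 < p)
    (p0 pend : EuclideanSpace ℝ (Fin 2)) (z : Fin J → EuclideanSpace ℝ (Fin 2))
    (L : ℝ)
    (htour : ∀ w : Fin J → EuclideanSpace ℝ (Fin 2), (∀ j, w j = z j) →
      pathLen J p0 pend w > L)
    (wstar : Fin J → EuclideanSpace ℝ (Fin 2))
    (hfeas : pathLen J p0 pend wstar ≤ L)
    (hmin : ∀ w, pathLen J p0 pend w ≤ L → totalEnergy J p z wstar ≤ totalEnergy J p z w) :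
    pathLen J p0 pend wstar = L := by
  by_contra hne
  obtain ⟨j, hj⟩ : ∃ j, wstar j ≠ z j := by
    by_contra! h
    exact (htour wstar h).not_ge hfeas
  set γ : ℝ → Fin J → EuclideanSpace ℝ (Fin 2) :=
    fun t => Function.update wstar j (AffineMap.lineMap (wstar j) (z j) t)
  have hslack : ∀ᶠ t in 𝓝 0, pathLen J p0 pend (γ t) < L := by
    refine ((continuous_pathLen J p0 pend).comp (by fun_prop : Continuous γ)).continuousAt
      |>.eventually_lt continuousAt_const ?_
    simpa [γ] using hfeas.lt_of_ne hne
  obtain ⟨t, ⟨ht_slack, ht₁⟩, ht₀⟩ :=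
    (((hslack.and (eventually_lt_nhds one_pos)).filter_mono nhdsWithin_le_nhds).and
      (self_mem_nhdsWithin (s := Set.Ioi 0))).exists
  exact (hmin _ ht_slack.le).not_gt
    (totalEnergy_update_lt hp z wstar (norm_lineMap_sub_right_lt hj ht₀ ht₁))

theorem stmt_4 (J : ℕ) (p : ℝ) (hp : 0 < p)
    (p0 pend : EuclideanSpace ℝ (Fin 2)) (z : Fin J → EuclideanSpace ℝ (Fin 2))
    (L : ℝ) (hL : ‖p0 - pend‖ < L)
    (htour : ∀ w : Fin J → EuclideanSpace ℝ (Fin 2), (∀ j, w j = z j) →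
      pathLen J p0 pend w > L)
    (wstar : Fin J → EuclideanSpace ℝ (Fin 2))
    (hfeas : pathLen J p0 pend wstar ≤ L)
    (hmin : ∀ w, pathLen J p0 pend w ≤ L → totalEnergy J p z wstar ≤ totalEnergy J p z w) :
    pathLen J p0 pend wstar = L :=
  stmt_4_general J p hp p0 pend z L htour wstar hfeas hmin
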